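/- arXiv:1901.06191 — 2 statements merged into one kernel-verified Lean document; each statement's English description precedes it below -/
import Mathlib

section
/- If A is a coherent quantale, then Max(A) = Max(R(A)) and Spec(A) = Spec(R(A)), where R(A) is the set of radical elements of A (elements a with ρ(a) = a). -/
open CompleteLattice

/-- A commutative unital quantale: a complete lattice with a commutative monoid
multiplication distributing over arbitrary joins, whose unit is the top element. -/
class CommQuantale (A : Type*) extends CompleteLattice A, CommMonoid A where
  one_eq_top : (1 : A) = ⊤
  mul_sSup : ∀ (a : A) (S : Set A), a * sSup S = ⨆ b ∈ S, a * b

namespace CommQuantale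

variable {A : Type*} [CommQuantale A]

/-- A coherent quantale: algebraic, with `1 = ⊤` compact and compacts closed under `*`. -/
def Coherent (A : Type*) [CommQuantale A] : Prop :=
  (∀ a : A, a = sSup {c : A | IsCompactElement c ∧ c ≤ a}) ∧
  IsCompactElement (⊤ : A) ∧
  ∀ c d : A, IsCompactElement c → IsCompactElement d → IsCompactElement (c * d)

/-- m-prime element. -/
def MPrime (p : A) : Prop :=
  p < ⊤ ∧ ∀ a b : A, a * b ≤ p → a ≤ p ∨ b ≤ p

/-- The radical of an element. -/
def rad (a : A) : A := sInf {p : A | MPrime p ∧ a ≤ p}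

/-- Maximal element of `A \ {1}`. -/
def MaxElem (m : A) : Prop := m < ⊤ ∧ ∀ x : A, m ≤ x → x < ⊤ → x = m

/-- Radical element. -/
def RadElem (a : A) : Prop := rad a = a

/-- Residuation `a → b`. -/
def res (a b : A) : A := sSup {x : A | a * x ≤ b}

/-- Complemented element (member of the Boolean center `B(A)`). -/
def Complemented (e : A) : Prop := ∃ f : A, e ⊔ f = ⊤ ∧ e ⊓ f = ⊥

end CommQuantale

open CommQuantale

/-- Maximal element of the frame `R(A)` of radical elements. -/
def MaxR {A : Type*} [CommQuantale A] (m : A) : Prop :=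
  RadElem m ∧ m < ⊤ ∧ ∀ x : A, RadElem x → m ≤ x → x < ⊤ → x = m

/-- m-prime element of the frame `R(A)` (whose multiplication is the meet). -/
def MPrimeR {A : Type*} [CommQuantale A] (p : A) : Prop :=
  RadElem p ∧ p < ⊤ ∧
    ∀ a b : A, RadElem a → RadElem b → a ⊓ b ≤ p → a ≤ p ∨ b ≤ p

/-!
Every maximal element is m-prime, hence radical, and the meet of radicals is below the radical
of the product, `ρ a ⊓ ρ b ≤ ρ (a * b)`; this gives `Spec A = Spec R(A)` and
`Max A ⊆ Max R(A)`. Conversely, for `m ∈ Max R(A)` and `m ≤ x < ⊤`, the radical `ρ x` is again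
proper, because compactness of `⊤` puts a maximal, hence m-prime, element above `x`. So
`ρ x = m` by maximality in `R(A)`, and `x ≤ ρ x = m`.
-/

namespace CommQuantale

variable {A : Type*} [CommQuantale A]

lemma mul_sup (a b c : A) : a * (b ⊔ c) = a * b ⊔ a * c := by
  rw [← sSup_pair, mul_sSup, iSup_pair]

lemma sup_mul (a b c : A) : (a ⊔ b) * c = a * c ⊔ b * c := by
  rw [mul_comm, mul_sup, mul_comm c, mul_comm c]

lemma mul_le_mul_left {b c : A} (h : b ≤ c) (a : A) : a * b ≤ a * c := by
  rw [← sup_eq_right.mpr h, mul_sup]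
  exact le_sup_left

lemma mul_le_left (a b : A) : a * b ≤ a := by
  simpa [← one_eq_top] using mul_le_mul_left (le_top : b ≤ ⊤) a

lemma mul_le_right (a b : A) : a * b ≤ b := by
  rw [mul_comm]
  exact mul_le_left b a

lemma mul_le_inf (a b : A) : a * b ≤ a ⊓ b :=
  le_inf (mul_le_left a b) (mul_le_right a b)

lemma le_rad (a : A) : a ≤ rad a :=
  le_sInf fun _ hp => hp.2

lemma rad_mono {a b : A} (h : a ≤ b) : rad a ≤ rad b :=
  sInf_le_sInf fun _ hp => ⟨hp.1, h.trans hp.2⟩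

lemma rad_le_of_radElem {a p : A} (hp : RadElem p) (h : a ≤ p) : rad a ≤ p :=
  hp ▸ rad_mono h

lemma MPrime.rad_le {a p : A} (hp : MPrime p) (h : a ≤ p) : rad a ≤ p :=
  sInf_le ⟨hp, h⟩

lemma MPrime.radElem {p : A} (hp : MPrime p) : RadElem p :=
  le_antisymm (hp.rad_le le_rfl) (le_rad p)

lemma radElem_rad (a : A) : RadElem (rad a) :=
  le_antisymm (le_sInf fun _ hp => hp.1.rad_le (hp.1.rad_le hp.2)) (le_rad _)

lemma rad_inf_rad_le_rad_mul (a b : A) : rad a ⊓ rad b ≤ rad (a * b) := by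
  refine le_sInf fun q ⟨hq, hab⟩ => ?_
  rcases hq.2 a b hab with h | h
  · exact inf_le_left.trans (hq.rad_le h)
  · exact inf_le_right.trans (hq.rad_le h)

lemma maxElem_iff_isCoatom {m : A} : MaxElem m ↔ IsCoatom m := by
  rw [isCoatom_iff_ge_of_le, MaxElem, lt_top_iff_ne_top]
  exact and_congr_right fun _ => ⟨fun h x hx hmx => (h x hmx hx.lt_top).le,
    fun h x hmx hx => le_antisymm (h x hx.ne hmx) hmx⟩

lemma MaxElem.mprime {m : A} (hm : MaxElem m) : MPrime m := by
  refine ⟨hm.1, fun a b hab => or_iff_not_imp_left.mpr fun ha => ?_⟩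
  have hma : m ⊔ a = ⊤ :=
    (maxElem_iff_isCoatom.mp hm).2 _ (left_lt_sup.mpr ha)
  calc b = (m ⊔ a) * b := by rw [hma, ← one_eq_top, one_mul]
    _ = m * b ⊔ a * b := sup_mul m a b
    _ ≤ m := sup_le (mul_le_left m b) hab

lemma exists_maxElem_ge (htop : IsCompactElement (⊤ : A)) {x : A} (hx : x < ⊤) :
    ∃ m : A, MaxElem m ∧ x ≤ m := by
  have := coatomic_of_top_compact htop
  obtain ⟨m, hm, hxm⟩ := (eq_top_or_exists_le_coatom x).resolve_left hx.ne
  exact ⟨m, maxElem_iff_isCoatom.mpr hm, hxm⟩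

lemma rad_lt_top (htop : IsCompactElement (⊤ : A)) {x : A} (hx : x < ⊤) : rad x < ⊤ := by
  obtain ⟨m, hm, hxm⟩ := exists_maxElem_ge htop hx
  exact (hm.mprime.rad_le hxm).trans_lt hm.1

lemma maxElem_iff_maxR (htop : IsCompactElement (⊤ : A)) {m : A} : MaxElem m ↔ MaxR m := by
  refine ⟨fun hm => ⟨hm.mprime.radElem, hm.1, fun x _ => hm.2 x⟩, fun ⟨hrad, hlt, hmax⟩ => ?_⟩
  refine ⟨hlt, fun x hmx hx => le_antisymm ?_ hmx⟩
  have hrad_x : rad x = m :=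
    hmax _ (radElem_rad x) (hrad ▸ rad_mono hmx) (rad_lt_top htop hx)
  exact hrad_x ▸ le_rad x

lemma mprime_iff_mprimeR {p : A} : MPrime p ↔ MPrimeR p := by
  refine ⟨fun hp => ⟨hp.radElem, hp.1, fun a b _ _ hab => hp.2 a b ((mul_le_inf a b).trans hab)⟩,
    fun ⟨hrad, hlt, hprime⟩ => ⟨hlt, fun a b hab => ?_⟩⟩
  have h : rad a ⊓ rad b ≤ p :=
    (rad_inf_rad_le_rad_mul a b).trans (rad_le_of_radElem hrad hab)
  exact (hprime _ _ (radElem_rad a) (radElem_rad b) h).imp (le_rad a).trans (le_rad b).trans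

end CommQuantale

theorem stmt8 {A : Type*} [CommQuantale A] (hA : Coherent A) :
    {m : A | MaxElem m} = {m : A | MaxR m} ∧
    {p : A | MPrime p} = {p : A | MPrimeR p} :=
  ⟨Set.ext fun _ => maxElem_iff_maxR hA.2.1, Set.ext fun _ => mprime_iff_mprimeR⟩
end

section
/- For any element a of a coherent quantale A, ρ(a) = (a*)_*, i.e., the radical of a equals the join of all compact elements c with λ(c) in the ideal a* = {λ(c) | c ∈ K(A), c ≤ a} of the reticulation. -/
/-!
A compact `c` lies below `rad a` exactly when some power of `c` lies below `a`: one direction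
because m-primes absorb powers, the other by Krull's argument — if no power of `c` is below `a`,
Zorn's lemma (chains are handled by compactness of the powers) gives an element maximal among
those above `a` avoiding all powers of `c`, and such an element is m-prime. Since `l (c ^ n) = l c`
for `n ≥ 1` and `l c ≤ l d` means that a power of `c` is below `d`, the compacts below `rad a` are
exactly those `c` with `l c ∈ a*`, and algebraicity of `A` finishes the proof.
-/

open CompleteLattice

open CommQuantale

/-- A reticulation of a coherent quantale `A`: a bounded distributive lattice `L`
with a map `l` which is surjective from the compacts of `A` onto `L` and satisfies
the reticulation axioms on compact elements. -/
structure IsReticulation (A : Type*) [CommQuantale A] (L : Type*)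
    [DistribLattice L] [BoundedOrder L] (l : A → L) : Prop where
  surj : ∀ y : L, ∃ c : A, IsCompactElement c ∧ l c = y
  le_sup : ∀ a b : A, IsCompactElement a → IsCompactElement b → l (a ⊔ b) ≤ l a ⊔ l b
  map_mul : ∀ a b : A, IsCompactElement a → IsCompactElement b → l (a * b) = l a ⊓ l b
  le_iff : ∀ a b : A, IsCompactElement a → IsCompactElement b →
    (l a ≤ l b ↔ ∃ n : ℕ, 1 ≤ n ∧ a ^ n ≤ b)

/-- An ideal of a lattice, as a set. -/
def IsIdealSet {L : Type*} [Lattice L] (I : Set L) : Prop :=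
  I.Nonempty ∧ (∀ x ∈ I, ∀ y : L, y ≤ x → y ∈ I) ∧ ∀ x ∈ I, ∀ y ∈ I, x ⊔ y ∈ I

/-- A prime ideal of a lattice, as a set. -/
def IsPrimeIdealSet {L : Type*} [Lattice L] (I : Set L) : Prop :=
  IsIdealSet I ∧ I ≠ Set.univ ∧ ∀ x y : L, x ⊓ y ∈ I → x ∈ I ∨ y ∈ I

/-- The ideal `a* = {l c | c compact, c ≤ a}` of the reticulation. -/
def qstar {A : Type*} [CommQuantale A] {L : Type*} (l : A → L) (a : A) : Set L :=
  l '' {c : A | IsCompactElement c ∧ c ≤ a}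

/-- The element `I_* = ⋁{c compact | l c ∈ I}` of the quantale. -/
def qistar {A : Type*} [CommQuantale A] {L : Type*} (l : A → L) (I : Set L) : A :=
  sSup {c : A | IsCompactElement c ∧ l c ∈ I}

namespace CommQuantale

open Quantale

variable {A : Type*} [CommQuantale A]

instance : IsQuantale A where
  mul_sSup_distrib := mul_sSup
  sSup_mul_distrib s x := by rw [mul_comm, mul_sSup]; simp only [mul_comm x]

theorem mul_le_left_s13 (x y : A) : x * y ≤ x :=
  mul_le_of_le_one_right' (one_eq_top (A := A) ▸ le_top)

theorem Coherent.isCompactElement_pow (hA : Coherent A) {c : A} (hc : IsCompactElement c) :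
    ∀ n : ℕ, IsCompactElement (c ^ n)
  | 0 => by rw [pow_zero, one_eq_top]; exact hA.2.1
  | n + 1 => by rw [pow_succ]; exact hA.2.2 _ _ (hA.isCompactElement_pow hc n) hc

theorem MPrime.le_of_pow_le {p c : A} (hp : MPrime p) : ∀ {n : ℕ}, c ^ n ≤ p → c ≤ p
  | 0, h => absurd (h.trans_lt hp.1) (by rw [pow_zero, one_eq_top]; exact lt_irrefl ⊤)
  | n + 1, h => by
    rw [pow_succ] at h
    exact (hp.2 _ _ h).elim hp.le_of_pow_le id

theorem le_rad_of_pow_le {a c : A} {n : ℕ} (h : c ^ n ≤ a) : c ≤ rad a :=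
  le_sInf fun _ ⟨hp, hap⟩ => hp.le_of_pow_le (h.trans hap)

theorem mPrime_of_maximal_not_pow_le {a c p : A}
    (hp : Maximal (· ∈ {x | a ≤ x ∧ ∀ n : ℕ, ¬ c ^ n ≤ x}) p) : MPrime p := by
  have escape : ∀ z, ¬ z ≤ p → ∃ n : ℕ, c ^ n ≤ p ⊔ z := fun z hz => by
    by_contra! hpz
    exact hz (le_sup_right.trans (hp.2 ⟨hp.1.1.trans le_sup_left, hpz⟩ le_sup_left))
  refine ⟨lt_top_iff_ne_top.2 fun htop => hp.1.2 0 (by simp [htop]), fun x y hxy => ?_⟩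
  by_contra! hxyp
  obtain ⟨m, hm⟩ := escape x hxyp.1
  obtain ⟨k, hk⟩ := escape y hxyp.2
  have hprod : (p ⊔ x) * (p ⊔ y) ≤ p := by
    rw [sup_mul_distrib, mul_sup_distrib, mul_sup_distrib]
    refine sup_le (sup_le (mul_le_left_s13 _ _) (mul_le_left_s13 _ _)) (sup_le ?_ hxy)
    rw [mul_comm]
    exact mul_le_left_s13 _ _
  exact hp.1.2 (m + k) ((pow_add c m k ▸ mul_le_mul' hm hk).trans hprod)

theorem exists_mPrime_not_le_of_forall_not_pow_le {a c : A}
    (hpow : ∀ n : ℕ, IsCompactElement (c ^ n)) (ha : ∀ n : ℕ, ¬ c ^ n ≤ a) :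
    ∃ p, MPrime p ∧ a ≤ p ∧ ¬ c ≤ p := by
  obtain ⟨p, hap, hp⟩ := zorn_le_nonempty₀ {x | a ≤ x ∧ ∀ n : ℕ, ¬ c ^ n ≤ x}
    (fun S hSF hS y hy => by
      refine ⟨sSup S, ⟨(hSF hy).1.trans (le_sSup hy), fun n hn => ?_⟩, fun z hz => le_sSup hz⟩
      obtain ⟨x, hxS, hx⟩ := (isCompactElement_iff_le_of_directed_sSup_le A _).1 (hpow n) S
        ⟨y, hy⟩ hS.directedOn hn
      exact (hSF hxS).2 n hx) a ⟨le_rfl, ha⟩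
  exact ⟨p, mPrime_of_maximal_not_pow_le hp, hap, fun hcp => hp.1.2 1 (by rwa [pow_one])⟩

theorem exists_pow_le_of_le_rad {a c : A} (hpow : ∀ n : ℕ, IsCompactElement (c ^ n))
    (hc : c ≤ rad a) : ∃ n : ℕ, c ^ n ≤ a := by
  by_contra! ha
  obtain ⟨p, hp, hap, hcp⟩ := exists_mPrime_not_le_of_forall_not_pow_le hpow ha
  exact hcp (hc.trans (sInf_le ⟨hp, hap⟩))

end CommQuantale

theorem IsReticulation.map_pow_succ {A : Type*} [CommQuantale A] {L : Type*} [DistribLattice L]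
    [BoundedOrder L] {l : A → L} (h : IsReticulation A L l) (hA : Coherent A) {c : A}
    (hc : IsCompactElement c) : ∀ n : ℕ, l (c ^ (n + 1)) = l c
  | 0 => by rw [pow_one]
  | n + 1 => by
    rw [pow_succ, h.map_mul _ _ (hA.isCompactElement_pow hc _) hc, h.map_pow_succ hA hc n,
      inf_idem]

theorem stmt13 {A : Type*} [CommQuantale A]
    {L : Type*} [DistribLattice L] [BoundedOrder L]
    (hA : Coherent A) {l : A → L} (h : IsReticulation A L l) (a : A) :
    rad a = qistar l (qstar l a) := by
  refine le_antisymm ?_ (sSup_le ?_)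
  · rw [hA.1 (rad a)]
    refine sSup_le fun c ⟨hc, hca⟩ => le_sSup ⟨hc, ?_⟩
    obtain ⟨n, hn⟩ := exists_pow_le_of_le_rad (hA.isCompactElement_pow hc) hca
    exact ⟨c ^ (n + 1), ⟨hA.isCompactElement_pow hc _, (pow_succ c n ▸ mul_le_left_s13 _ _).trans hn⟩,
      h.map_pow_succ hA hc n⟩
  · rintro c ⟨hc, d, ⟨hd, hda⟩, hdc⟩
    obtain ⟨n, -, hn⟩ := (h.le_iff c d hc hd).1 hdc.ge
    exact le_rad_of_pow_le (hn.trans hda)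
end
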